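/- arXiv:1708.07010 — 7 statements merged into one kernel-verified Lean document; each statement's English description precedes it below -/
import Mathlib

section
/- Let 0 < p < 1, λ > 0, and let h : ℝ^n → ℝ be a continuously differentiable function. Then there exist ε > 0 and δ > 0 such that h(x) + λ∑_{i=1}^n |x_i|^p ≥ h(0) + ε‖x‖ for every x ∈ ℝ^n with ‖x‖ < δ. -/
lemma norm_le_sum_abs (n : ℕ) (x : EuclideanSpace ℝ (Fin n)) : ‖x‖ ≤ ∑ i, |x i| := by
  rw [EuclideanSpace.norm_eq]
  have h1 : ∑ i, ‖x i‖ ^ 2 ≤ (∑ i, |x i|) ^ 2 := by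
    simp only [Real.norm_eq_abs]
    exact Finset.sum_sq_le_sq_sum_of_nonneg (fun i _ => abs_nonneg _)
  calc Real.sqrt (∑ i, ‖x i‖ ^ 2) ≤ Real.sqrt ((∑ i, |x i|) ^ 2) := Real.sqrt_le_sqrt h1
    _ = ∑ i, |x i| := Real.sqrt_sq (Finset.sum_nonneg fun i _ => abs_nonneg _)

lemma abs_coord_le_norm (n : ℕ) (x : EuclideanSpace ℝ (Fin n)) (i : Fin n) : |x i| ≤ ‖x‖ := by
  rw [EuclideanSpace.norm_eq]
  have : |x i| = Real.sqrt (‖x i‖ ^ 2) := by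
    rw [Real.sqrt_sq (norm_nonneg _), Real.norm_eq_abs]
  rw [this]
  exact Real.sqrt_le_sqrt (Finset.single_le_sum (f := fun j => ‖x j‖ ^ 2)
    (fun j _ => sq_nonneg _) (Finset.mem_univ i))

lemma norm_rpow_le_sum (n : ℕ) (p : ℝ) (hp0 : 0 < p) (hp1 : p < 1)
    (x : EuclideanSpace ℝ (Fin n)) (hx : x ≠ 0) : ‖x‖ ^ p ≤ ∑ i, |x i| ^ p := by
  have hxn : 0 < ‖x‖ := norm_pos_iff.2 hx
  have key : ∀ i : Fin n, |x i| * ‖x‖ ^ (p - 1) ≤ |x i| ^ p := by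
    intro i
    rcases eq_or_lt_of_le (abs_nonneg (x i)) with h0 | h0
    · rw [← h0, zero_mul, Real.zero_rpow hp0.ne']
    · have h1 : ‖x‖ ^ (p - 1) ≤ |x i| ^ (p - 1) :=
        Real.rpow_le_rpow_of_nonpos h0 (abs_coord_le_norm n x i) (by linarith)
      calc |x i| * ‖x‖ ^ (p - 1) ≤ |x i| * |x i| ^ (p - 1) := by
            exact mul_le_mul_of_nonneg_left h1 (abs_nonneg _)
        _ = |x i| ^ p := by
            have hadd := (Real.rpow_add h0 1 (p - 1)).symm
            rw [Real.rpow_one] at hadd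
            rw [hadd]; congr 1; ring
  calc ‖x‖ ^ p = ‖x‖ * ‖x‖ ^ (p - 1) := by
        have hadd := (Real.rpow_add hxn 1 (p - 1)).symm
        rw [Real.rpow_one] at hadd
        rw [hadd]; congr 1; ring
    _ ≤ (∑ i, |x i|) * ‖x‖ ^ (p - 1) := by
        apply mul_le_mul_of_nonneg_right (norm_le_sum_abs n x)
        exact Real.rpow_nonneg (norm_nonneg _) _
    _ = ∑ i, |x i| * ‖x‖ ^ (p - 1) := Finset.sum_mul ..
    _ ≤ ∑ i, |x i| ^ p := Finset.sum_le_sum fun i _ => key i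

/-- Lemma 3.1, first-order growth of the ℓ_p regularizer at 0:
for `0 < p < 1`, `λ > 0` and a continuously differentiable `h : ℝⁿ → ℝ`, there exist
`ε > 0` and `δ > 0` such that `h x + λ ∑ |x_i|^p ≥ h 0 + ε ‖x‖` for all `x` with `‖x‖ < δ`. -/
theorem stmt1 (n : ℕ) (p lam : ℝ) (hp0 : 0 < p) (hp1 : p < 1) (hlam : 0 < lam)
    (h : EuclideanSpace ℝ (Fin n) → ℝ) (hh : ContDiff ℝ 1 h) :
    ∃ ε > (0 : ℝ), ∃ δ > (0 : ℝ), ∀ x : EuclideanSpace ℝ (Fin n), ‖x‖ < δ →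
      h 0 + ε * ‖x‖ ≤ h x + lam * ∑ i, |x i| ^ p := by
  obtain ⟨K, t, ht, hK⟩ := (hh.contDiffAt (x := 0)).exists_lipschitzOnWith
  obtain ⟨r, hr, hball⟩ := Metric.mem_nhds_iff.1 ht
  -- choose δ
  set C : ℝ := (K : ℝ) + 1 with hC
  have hCpos : 0 < C := by positivity
  set δ₀ : ℝ := (lam / C) ^ (1 / (1 - p)) with hδ₀
  have hδ₀pos : 0 < δ₀ := Real.rpow_pos_of_pos (by positivity) _
  refine ⟨1, one_pos, min r δ₀, lt_min hr hδ₀pos, fun x hx => ?_⟩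
  rcases eq_or_ne x 0 with rfl | hx0
  · simp [Real.zero_rpow hp0.ne', Finset.sum_nonneg, mul_nonneg hlam.le]
  have hxr : ‖x‖ < r := lt_of_lt_of_le hx (min_le_left _ _)
  have hxδ : ‖x‖ < δ₀ := lt_of_lt_of_le hx (min_le_right _ _)
  have hxn : 0 < ‖x‖ := norm_pos_iff.2 hx0
  -- Lipschitz bound: h 0 - h x ≤ K ‖x‖
  have hmem : x ∈ t := hball (by simpa [Metric.mem_ball] using hxr)
  have hmem0 : (0 : EuclideanSpace ℝ (Fin n)) ∈ t := hball (by simp [Metric.mem_ball, hr])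
  have hlip : |h 0 - h x| ≤ K * ‖x‖ := by
    have := hK.dist_le_mul 0 hmem0 x hmem
    simpa [Real.dist_eq, dist_eq_norm] using this
  have h1 : h 0 - h x ≤ K * ‖x‖ := le_trans (le_abs_self _) hlip
  -- growth of the regularizer: lam * ∑ ≥ C * ‖x‖
  have h2 : C * ‖x‖ ≤ lam * ∑ i, |x i| ^ p := by
    have hsum : ‖x‖ ^ p ≤ ∑ i, |x i| ^ p := norm_rpow_le_sum n p hp0 hp1 x hx0
    have hCx : C * ‖x‖ ≤ lam * ‖x‖ ^ p := by
      -- equivalent to ‖x‖^(1-p) ≤ lam / C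
      have hx1p : ‖x‖ ^ (1 - p) ≤ lam / C := by
        have := Real.rpow_le_rpow hxn.le hxδ.le (by linarith : (0:ℝ) ≤ 1 - p)
        rwa [hδ₀, ← Real.rpow_mul (by positivity),
          one_div, inv_mul_cancel₀ (by linarith : (1:ℝ) - p ≠ 0), Real.rpow_one] at this
      have : C * ‖x‖ ^ (1 - p) ≤ lam := by
        rw [div_eq_mul_inv] at hx1p
        calc C * ‖x‖ ^ (1 - p) ≤ C * (lam * C⁻¹) := by
              exact mul_le_mul_of_nonneg_left hx1p hCpos.le
          _ = lam := by field_simp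
      calc C * ‖x‖ = C * (‖x‖ ^ (1 - p) * ‖x‖ ^ p) := by
            rw [← Real.rpow_add hxn]; norm_num
        _ = (C * ‖x‖ ^ (1 - p)) * ‖x‖ ^ p := by ring
        _ ≤ lam * ‖x‖ ^ p := by
            exact mul_le_mul_of_nonneg_right this (Real.rpow_nonneg hxn.le _)
    exact hCx.trans (mul_le_mul_of_nonneg_left hsum hlam.le)
  have hK1 : h 0 + 1 * ‖x‖ ≤ h x + K * ‖x‖ + ‖x‖ := by linarith
  have : (K : ℝ) * ‖x‖ + ‖x‖ = C * ‖x‖ := by ring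
  linarith [h2, h1]
end

section
/- The set of local minima of F is finite; that is, the set {x* ∈ ℝ^n : there is a neighborhood of x* on which F(x) ≥ F(x*)} is a finite set. -/
/-!
Two local minima `x`, `y` with the same sign pattern coincide, and there are only finitely many
sign patterns. Near `t ∈ [0, 1]` the objective along the segment from `x` to `y` is
`g t = q t + λ ∑ ((1 - t) aᵢ + t bᵢ) ^ p`, with `q` quadratic and `aᵢ = |xᵢ|`, `bᵢ = |yᵢ|`
positive on the common support. Its second derivative is a constant plus the terms
`λ p (p - 1) (bᵢ - aᵢ)² ((1 - t) aᵢ + t bᵢ) ^ (p - 2)`, so it is strictly concave on `[0, 1]`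
(`p (p - 1) < 0` and `z ^ (p - 2)` is strictly convex). Minima at `0` and `1` give `g' = 0` and
`g'' ≥ 0` at both ends, hence `g'' > 0` on `(0, 1)` and `g'` is strictly increasing there,
contradicting `g' 0 = g' 1`.
-/

open Filter Set Topology

theorem IsLocalMin.secondDeriv_nonneg_of_hasDerivAt {f f' : ℝ → ℝ} {a f'' : ℝ}
    (hmin : IsLocalMin f a) (hf : ∀ᶠ t in 𝓝 a, HasDerivAt f (f' t) t)
    (hf' : HasDerivAt f' f'' a) : 0 ≤ f'' := by
  by_contra! hneg
  have hderiv : deriv f =ᶠ[𝓝 a] f' := hf.mono fun t ht => ht.deriv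
  have hderiv2 : deriv (deriv f) a = f'' := hderiv.deriv_eq.trans hf'.deriv
  have hcrit : deriv f a = 0 :=
    hf.self_of_nhds.deriv.trans (hmin.hasDerivAt_eq_zero hf.self_of_nhds)
  have hmax : IsLocalMax f a :=
    isLocalMax_of_deriv_deriv_neg (hderiv2 ▸ hneg) hcrit hf.self_of_nhds.continuousAt
  have hconst : f =ᶠ[𝓝 a] fun _ => f a := (hmin.and hmax).mono fun t ht => le_antisymm ht.2 ht.1
  have : deriv (deriv f) a = 0 := by
    rw [hconst.deriv.deriv_eq]; simp
  linarith

theorem IsLocalMin.not_isLocalMin_of_strictConcaveOn {g g' g'' : ℝ → ℝ} {a b : ℝ} (hab : a < b)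
    (hg : ∀ t ∈ Icc a b, ∀ᶠ s in 𝓝 t, HasDerivAt g (g' s) s)
    (hg' : ∀ t ∈ Icc a b, HasDerivAt g' (g'' t) t) (hconc : StrictConcaveOn ℝ (Icc a b) g'')
    (ha : IsLocalMin g a) : ¬ IsLocalMin g b := by
  intro hb
  have hamem : a ∈ Icc a b := left_mem_Icc.2 hab.le
  have hbmem : b ∈ Icc a b := right_mem_Icc.2 hab.le
  have hpos : ∀ t ∈ Ioo a b, 0 < g'' t := fun t ht =>
    (le_min (ha.secondDeriv_nonneg_of_hasDerivAt (hg a hamem) (hg' a hamem))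
      (hb.secondDeriv_nonneg_of_hasDerivAt (hg b hbmem) (hg' b hbmem))).trans_lt
      (hconc.lt_on_openSegment hamem hbmem hab.ne (by rwa [openSegment_eq_Ioo hab]))
  have hmono : StrictMonoOn g' (Icc a b) := by
    refine strictMonoOn_of_deriv_pos (convex_Icc a b)
      (fun t ht => (hg' t ht).continuousAt.continuousWithinAt) fun t ht => ?_
    rw [interior_Icc] at ht
    rw [(hg' t (Ioo_subset_Icc_self ht)).deriv]
    exact hpos t ht
  have h'a := ha.hasDerivAt_eq_zero (hg a hamem).self_of_nhds
  have h'b := hb.hasDerivAt_eq_zero (hg b hbmem).self_of_nhds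
  exact (hmono hamem hbmem hab).ne (h'a.trans h'b.symm)

theorem strictConvexOn_rpow_of_neg {q : ℝ} (hq : q < 0) :
    StrictConvexOn ℝ (Ioi 0) fun z : ℝ => z ^ q := by
  refine StrictMonoOn.strictConvexOn_of_deriv (convex_Ioi 0)
    (fun z hz => (Real.continuousAt_rpow_const _ _ (Or.inl (ne_of_gt hz))).continuousWithinAt) ?_
  rw [interior_Ioi, Real.deriv_rpow_const']
  exact fun z hz w _ hzw =>
    mul_lt_mul_of_neg_left (Real.rpow_lt_rpow_of_neg hz hzw (by linarith)) hq

theorem StrictConcaveOn.fun_sum_of_concaveOn {𝕜 E β ι : Type*} [Semiring 𝕜] [PartialOrder 𝕜]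
    [AddCommMonoid E] [SMul 𝕜 E] [AddCommMonoid β] [PartialOrder β] [IsOrderedCancelAddMonoid β]
    [DistribMulAction 𝕜 β] [Fintype ι] {s : Set E} {f : ι → E → β} {i₀ : ι}
    (hi₀ : StrictConcaveOn 𝕜 s (f i₀)) (hf : ∀ i, ConcaveOn 𝕜 s (f i)) :
    StrictConcaveOn 𝕜 s fun x => ∑ i, f i x := by
  refine ⟨hi₀.1, fun x hx y hy hxy a b ha hb hab => ?_⟩
  simp only [Finset.smul_sum, ← Finset.sum_add_distrib]
  exact Finset.sum_lt_sum (fun i _ => (hf i).2 hx hy ha.le hb.le hab)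
    ⟨i₀, Finset.mem_univ _, hi₀.2 hx hy hxy ha hb hab⟩

theorem strictConcaveOn_mul_rpow_segment {k q a b : ℝ} (hk : k < 0) (hq : q < 0) (ha : 0 < a)
    (hb : 0 < b) (hab : a ≠ b) :
    StrictConcaveOn ℝ (Icc 0 1) fun t => k * ((1 - t) * a + t * b) ^ q := by
  have hpos : ∀ t ∈ Icc (0 : ℝ) 1, (1 - t) * a + t * b ∈ Ioi 0 := fun t ht =>
    convex_Ioi 0 ha hb (sub_nonneg.2 ht.2) ht.1 (sub_add_cancel 1 t)
  refine ⟨convex_Icc 0 1, fun x hx y hy hxy α β hα hβ hαβ => ?_⟩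
  have hne : (1 - x) * a + x * b ≠ (1 - y) * a + y * b := fun h =>
    hxy (mul_right_cancel₀ (sub_ne_zero.2 hab.symm) (by linarith))
  have hconv := (strictConvexOn_rpow_of_neg hq).2 (hpos x hx) (hpos y hy) hne hα hβ hαβ
  have hcomb : (1 - (α • x + β • y)) * a + (α • x + β • y) * b =
      α • ((1 - x) * a + x * b) + β • ((1 - y) * a + y * b) := by
    simp only [smul_eq_mul]; linear_combination (-a) * hαβ
  simp only [smul_eq_mul] at hconv hcomb ⊢
  rw [hcomb]
  nlinarith [mul_lt_mul_of_neg_left hconv hk]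

theorem hasDerivAt_rpow_segment {a b p t : ℝ} (h : 0 < (1 - t) * a + t * b) :
    HasDerivAt (fun s => ((1 - s) * a + s * b) ^ p)
      (p * (b - a) * ((1 - t) * a + t * b) ^ (p - 1)) t := by
  have hseg : HasDerivAt (fun s : ℝ => (1 - s) * a + s * b) (b - a) t :=
    (((hasDerivAt_id t).const_sub 1).mul_const a |>.add
      ((hasDerivAt_id t).mul_const b)).congr_deriv (by ring)
  refine ((Real.hasDerivAt_rpow_const (Or.inl h.ne')).comp t hseg).congr_deriv ?_
  ring

theorem eventually_forall_segment_pos {ι : Type*} [Finite ι] {a b : ι → ℝ} (ha : ∀ i, 0 < a i)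
    (hb : ∀ i, 0 < b i) {t : ℝ} (ht : t ∈ Icc 0 1) :
    ∀ᶠ s in 𝓝 t, ∀ i, 0 < (1 - s) * a i + s * b i :=
  eventually_all.2 fun i => continuousAt_const.eventually_lt (by fun_prop)
    (convex_Ioi (0 : ℝ) (ha i) (hb i) (sub_nonneg.2 ht.2) ht.1 (sub_add_cancel 1 t))

theorem not_isLocalMin_one_of_isLocalMin_zero {ι : Type*} [Fintype ι] {p lam α β γ : ℝ}
    {a b : ι → ℝ} (hp0 : 0 < p) (hp1 : p < 1) (hlam : 0 < lam) (ha : ∀ i, 0 < a i)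
    (hb : ∀ i, 0 < b i) (hab : a ≠ b)
    (h0 : IsLocalMin
      (fun t => α + β * t + γ * t ^ 2 + lam * ∑ i, ((1 - t) * a i + t * b i) ^ p) 0) :
    ¬ IsLocalMin
      (fun t => α + β * t + γ * t ^ 2 + lam * ∑ i, ((1 - t) * a i + t * b i) ^ p) 1 := by
  set u : ι → ℝ → ℝ := fun i t => (1 - t) * a i + t * b i
  set g' : ℝ → ℝ := fun t => β + 2 * γ * t + lam * ∑ i, p * (b i - a i) * u i t ^ (p - 1)
  set k : ι → ℝ := fun i => lam * p * (p - 1) * (b i - a i) ^ 2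
  set g'' : ℝ → ℝ := fun t => ∑ i, k i * u i t ^ (p - 2) + 2 * γ
  have hP : ∀ t ∈ Icc (0 : ℝ) 1, ∀ᶠ s in 𝓝 t, ∀ i, 0 < u i s := fun t ht =>
    eventually_forall_segment_pos ha hb ht
  have hd1 : ∀ t, (∀ i, 0 < u i t) →
      HasDerivAt (fun t => α + β * t + γ * t ^ 2 + lam * ∑ i, u i t ^ p) (g' t) t := by
    intro t ht
    have hquad : HasDerivAt (fun t => α + β * t + γ * t ^ 2) (β + 2 * γ * t) t := by
      refine (((hasDerivAt_id t).const_mul β).const_add α |>.add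
        ((hasDerivAt_pow 2 t).const_mul γ)).congr_deriv ?_
      push_cast; ring
    exact hquad.add ((HasDerivAt.fun_sum fun i _ => hasDerivAt_rpow_segment (ht i)).const_mul lam)
  have hd2 : ∀ t, (∀ i, 0 < u i t) → HasDerivAt g' (g'' t) t := by
    intro t ht
    have hlin : HasDerivAt (fun t => β + 2 * γ * t) (2 * γ) t :=
      (((hasDerivAt_id t).const_mul (2 * γ)).const_add β).congr_deriv (mul_one _)
    refine (hlin.add ((HasDerivAt.fun_sum fun i _ =>
      (hasDerivAt_rpow_segment (p := p - 1) (ht i)).const_mul (p * (b i - a i))).const_mul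
        lam)).congr_deriv ?_
    rw [Finset.mul_sum, add_comm]
    refine congrArg (· + _) (Finset.sum_congr rfl fun i _ => ?_)
    rw [show p - 1 - 1 = p - 2 by ring]
    ring
  have hconc : StrictConcaveOn ℝ (Icc 0 1) g'' := by
    have hk : ∀ i, a i ≠ b i → k i < 0 := fun i h =>
      mul_neg_of_neg_of_pos (mul_neg_of_pos_of_neg (mul_pos hlam hp0) (by linarith))
        (pow_pos (abs_pos.2 (sub_ne_zero.2 h.symm)) 2 |>.trans_eq (sq_abs _))
    have hterm : ∀ i, a i ≠ b i → StrictConcaveOn ℝ (Icc 0 1) fun t => k i * u i t ^ (p - 2) :=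
      fun i h => strictConcaveOn_mul_rpow_segment (hk i h) (by linarith) (ha i) (hb i) h
    obtain ⟨i₀, hi₀⟩ := Function.ne_iff.1 hab
    refine ((hterm i₀ hi₀).fun_sum_of_concaveOn fun i => ?_).add_const (2 * γ)
    rcases eq_or_ne (a i) (b i) with h | h
    · simpa [k, h] using concaveOn_const (0 : ℝ) (convex_Icc (0 : ℝ) 1)
    · exact (hterm i h).concaveOn
  exact h0.not_isLocalMin_of_strictConcaveOn zero_lt_one (fun t ht => (hP t ht).mono hd1)
    (fun t ht => hd2 t (hP t ht).self_of_nhds) hconc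

theorem mul_nonneg_of_sign_eq {u v : ℝ} (h : SignType.sign u = SignType.sign v) : 0 ≤ u * v := by
  rcases lt_trichotomy u 0 with hu | rfl | hu
  · rw [sign_neg hu, eq_comm, sign_eq_neg_one_iff] at h; nlinarith
  · simp
  · rw [sign_pos hu, eq_comm, sign_eq_one_iff] at h; positivity

theorem abs_segment_of_mul_nonneg {u v t : ℝ} (huv : 0 ≤ u * v)
    (ht : 0 ≤ (1 - t) * |u| + t * |v|) : |(1 - t) * u + t * v| = (1 - t) * |u| + t * |v| := by
  rcases mul_nonneg_iff.1 huv with ⟨hu, hv⟩ | ⟨hu, hv⟩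
  · rw [abs_of_nonneg hu, abs_of_nonneg hv] at ht ⊢
    exact abs_of_nonneg ht
  · rw [abs_of_nonpos hu, abs_of_nonpos hv] at ht ⊢
    rw [abs_of_nonpos (by linarith)]
    ring

theorem norm_segment_sq {H : Type*} [NormedAddCommGroup H] [InnerProductSpace ℝ H] (v w : H)
    (t : ℝ) :
    ‖(1 - t) • v + t • w‖ ^ 2 = ‖v‖ ^ 2 + 2 * inner ℝ v (w - v) * t + ‖w - v‖ ^ 2 * t ^ 2 := by
  rw [show (1 - t) • v + t • w = v + t • (w - v) by module, norm_add_sq_real, inner_smul_right,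
    norm_smul, mul_pow, Real.norm_eq_abs, sq_abs]
  ring

section LpObjective

variable {ι H : Type*} [Fintype ι] [NormedAddCommGroup H] [InnerProductSpace ℝ H]

noncomputable def lpObjective (A : EuclideanSpace ℝ ι →L[ℝ] H) (b : H) (lam p : ℝ)
    (x : EuclideanSpace ℝ ι) : ℝ :=
  ‖A x - b‖ ^ 2 + lam * ∑ i, |x i| ^ p

theorem lpObjective_lineMap {A : EuclideanSpace ℝ ι →L[ℝ] H} {b : H} {lam p : ℝ} (hp : 0 < p)
    {x y : EuclideanSpace ℝ ι} (hsign : ∀ i, SignType.sign (x i) = SignType.sign (y i)) {t : ℝ}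
    (ht : ∀ i : {i // x i ≠ 0}, 0 < (1 - t) * |x i| + t * |y i|) :
    lpObjective A b lam p (AffineMap.lineMap x y t) =
      ‖A x - b‖ ^ 2 + 2 * inner ℝ (A x - b) (A y - b - (A x - b)) * t +
        ‖A y - b - (A x - b)‖ ^ 2 * t ^ 2 +
        lam * ∑ i : {i // x i ≠ 0}, ((1 - t) * |x i| + t * |y i|) ^ p := by
  have hA : A (AffineMap.lineMap x y t) - b = (1 - t) • (A x - b) + t • (A y - b) := by
    rw [AffineMap.lineMap_apply_module, map_add, map_smul, map_smul]
    module
  have hzero : ∀ i : {i // ¬ x i ≠ 0},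
      |(AffineMap.lineMap x y t : EuclideanSpace ℝ ι) i| ^ p = 0 := by
    intro ⟨i, hi⟩
    have hyi : y i = 0 := by
      rw [← sign_eq_zero_iff, ← hsign, sign_eq_zero_iff]; exact not_not.1 hi
    simp [AffineMap.lineMap_apply_module, not_not.1 hi, hyi, Real.zero_rpow hp.ne']
  rw [lpObjective, hA, norm_segment_sq, ← Fintype.sum_subtype_add_sum_subtype (fun i => x i ≠ 0)
      fun i => |(AffineMap.lineMap x y t : EuclideanSpace ℝ ι) i| ^ p,
    Finset.sum_eq_zero fun i _ => hzero i, add_zero]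
  congr 3
  funext i
  simp only [AffineMap.lineMap_apply_module, PiLp.add_apply, PiLp.smul_apply, smul_eq_mul]
  rw [abs_segment_of_mul_nonneg (mul_nonneg_of_sign_eq (hsign i)) (ht i).le]

theorem eq_of_isLocalMin_lpObjective_of_sign_eq {A : EuclideanSpace ℝ ι →L[ℝ] H} {b : H}
    {lam p : ℝ} (hp0 : 0 < p) (hp1 : p < 1) (hlam : 0 < lam) {x y : EuclideanSpace ℝ ι}
    (hx : IsLocalMin (lpObjective A b lam p) x) (hy : IsLocalMin (lpObjective A b lam p) y)
    (hsign : ∀ i, SignType.sign (x i) = SignType.sign (y i)) : x = y := by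
  by_contra hne
  have hxS : ∀ i : {i // x i ≠ 0}, 0 < |x i| := fun i => abs_pos.2 i.2
  have hyS : ∀ i : {i // x i ≠ 0}, 0 < |y i| := fun i => abs_pos.2 <| by
    rw [Ne, ← sign_eq_zero_iff, ← hsign, sign_eq_zero_iff]; exact i.2
  have hab : (fun i : {i // x i ≠ 0} => |x i|) ≠ fun i : {i // x i ≠ 0} => |y i| := by
    obtain ⟨j, hj⟩ : ∃ j, x j ≠ y j := by
      by_contra! h; exact hne (PiLp.ext h)
    have hxj : x j ≠ 0 := fun h0 => hj <| by
      rw [h0, eq_comm, ← sign_eq_zero_iff, ← hsign, h0, sign_zero]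
    refine Function.ne_iff.2 ⟨⟨j, hxj⟩, fun habs => hj ?_⟩
    rw [← sign_mul_abs (x j), ← sign_mul_abs (y j), hsign, habs]
  have hmin : ∀ t ∈ Icc (0 : ℝ) 1, IsLocalMin (lpObjective A b lam p) (AffineMap.lineMap x y t) →
      IsLocalMin (fun s => ‖A x - b‖ ^ 2 + 2 * inner ℝ (A x - b) (A y - b - (A x - b)) * s +
        ‖A y - b - (A x - b)‖ ^ 2 * s ^ 2 +
        lam * ∑ i : {i // x i ≠ 0}, ((1 - s) * |x i| + s * |y i|) ^ p) t := fun t ht h =>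
    (h.comp_continuous AffineMap.lineMap_continuous.continuousAt).congr <|
      (eventually_forall_segment_pos hxS hyS ht).mono fun s hs => lpObjective_lineMap hp0 hsign hs
  exact not_isLocalMin_one_of_isLocalMin_zero hp0 hp1 hlam hxS hyS hab
    (hmin 0 (left_mem_Icc.2 zero_le_one) (by rwa [AffineMap.lineMap_apply_zero]))
    (hmin 1 (right_mem_Icc.2 zero_le_one) (by rwa [AffineMap.lineMap_apply_one]))

end LpObjective

/-- Corollary 3.3: the ℓ_p regularized least squares objective
`F x = ‖Ax - b‖² + λ ∑ |x_i|^p` (`0 < p < 1`, `λ > 0`) has only finitely many local minima. -/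
theorem stmt3 (n m : ℕ) (p lam : ℝ) (hp0 : 0 < p) (hp1 : p < 1) (hlam : 0 < lam)
    (A : EuclideanSpace ℝ (Fin n) →L[ℝ] EuclideanSpace ℝ (Fin m))
    (b : EuclideanSpace ℝ (Fin m))
    (F : EuclideanSpace ℝ (Fin n) → ℝ)
    (hF : ∀ x, F x = ‖A x - b‖ ^ 2 + lam * ∑ i, |x i| ^ p) :
    {x : EuclideanSpace ℝ (Fin n) | IsLocalMin F x}.Finite := by
  obtain rfl : F = lpObjective A b lam p := funext hF
  refine Set.Finite.of_finite_image (f := fun x i => SignType.sign (x i)) (Set.toFinite _) ?_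
  exact fun x hx y hy hxy =>
    eq_of_isLocalMin_lpObjective_of_sign_eq hp0 hp1 hlam hx hy (congrFun hxy)
end

section
/- Let 0 < p < 1, λ > 0, let B be a real m×s matrix, and let σ : {1,…,s} → {+1,−1} be a fixed sign pattern. Then the set O_σ = { y ∈ ℝ^s : σ(i)·y_i > 0 for each i = 1,…,s, and the matrix 2BᵀB + λp(p−1)·diag((|y_i|^{p−2})_{i=1}^s) is positive definite } is a convex subset of ℝ^s. -/
open Real

/-- Convexity inequality for `t ↦ t^q` with `q ≤ 0` on positive reals. -/
lemma rpow_convex_aux {q u v a b : ℝ} (hq : q ≤ 0) (hu : 0 < u) (hv : 0 < v)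
    (ha : 0 ≤ a) (hb : 0 ≤ b) (hab : a + b = 1) :
    (a * u + b * v) ^ q ≤ a * u ^ q + b * v ^ q := by
  have h1 : u ^ a * v ^ b ≤ a * u + b * v :=
    Real.geom_mean_le_arith_mean2_weighted ha hb hu.le hv.le hab
  have hgm : 0 < u ^ a * v ^ b := mul_pos (rpow_pos_of_pos hu a) (rpow_pos_of_pos hv b)
  have h2 : (a * u + b * v) ^ q ≤ (u ^ a * v ^ b) ^ q :=
    Real.rpow_le_rpow_of_nonpos hgm h1 hq
  have h3 : (u ^ a * v ^ b) ^ q = (u ^ q) ^ a * (v ^ q) ^ b := by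
    rw [Real.mul_rpow (rpow_pos_of_pos hu a).le (rpow_pos_of_pos hv b).le]
    rw [← Real.rpow_mul hu.le, ← Real.rpow_mul hv.le,
      ← Real.rpow_mul hu.le, ← Real.rpow_mul hv.le, mul_comm a q, mul_comm b q]
  have h4 : (u ^ q) ^ a * (v ^ q) ^ b ≤ a * u ^ q + b * v ^ q :=
    Real.geom_mean_le_arith_mean2_weighted ha hb (rpow_pos_of_pos hu q).le
      (rpow_pos_of_pos hv q).le hab
  calc (a * u + b * v) ^ q ≤ (u ^ a * v ^ b) ^ q := h2
    _ = (u ^ q) ^ a * (v ^ q) ^ b := h3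
    _ ≤ a * u ^ q + b * v ^ q := h4

/-- convexity of the region `O_J` in the proof of Corollary 3.3:
for `0 < p < 1`, `λ > 0`, a linear map `B : ℝˢ → ℝᵐ` and a fixed sign pattern
`σ : {1,…,s} → {±1}`, the set of `y ∈ ℝˢ` with `σ_i y_i > 0` for all `i` and with
`2BᵀB + λ p (p-1) diag((|y_i|^{p-2}))` positive definite (expressed via its quadratic
form `2‖Bw‖² + λ p (p-1) ∑ |y_i|^{p-2} w_i² > 0` for all `w ≠ 0`) is convex. -/
theorem stmt4 (s m : ℕ) (p lam : ℝ) (hp0 : 0 < p) (hp1 : p < 1) (hlam : 0 < lam)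
    (B : EuclideanSpace ℝ (Fin s) →L[ℝ] EuclideanSpace ℝ (Fin m))
    (σ : Fin s → ℝ) (hσ : ∀ i, σ i = 1 ∨ σ i = -1) :
    Convex ℝ {y : EuclideanSpace ℝ (Fin s) |
      (∀ i, 0 < σ i * y i) ∧
      ∀ w : EuclideanSpace ℝ (Fin s), w ≠ 0 →
        0 < 2 * ‖B w‖ ^ 2 + lam * p * (p - 1) * ∑ i, |y i| ^ (p - 2) * w i ^ 2} := by
  rintro x ⟨hx1, hx2⟩ z ⟨hz1, hz2⟩ a b ha hb hab
  have habs : ∀ (y : EuclideanSpace ℝ (Fin s)), (∀ i, 0 < σ i * y i) →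
      ∀ i, |y i| = σ i * y i := by
    intro y hy i
    rcases hσ i with h | h <;> rcases abs_cases (y i) with ⟨he, _⟩ | ⟨he, hneg⟩ <;>
      simp [h] at hy ⊢ <;> nlinarith [hy i]
  have hsum : ∀ i : Fin s, 0 < σ i * (a • x + b • z) i := by
    intro i
    have : σ i * (a • x + b • z) i = a * (σ i * x i) + b * (σ i * z i) := by
      simp [PiLp.add_apply, PiLp.smul_apply, smul_eq_mul]; ring
    rw [this]
    rcases ha.lt_or_eq with ha' | ha'
    · have : 0 ≤ b * (σ i * z i) := mul_nonneg hb (hz1 i).le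
      nlinarith [hx1 i]
    · have hb' : b = 1 := by linarith
      simp [← ha', hb']; exact hz1 i
  refine ⟨hsum, fun w hw => ?_⟩
  have hq : p - 2 ≤ 0 := by linarith
  -- termwise convexity
  have hterm : ∀ i, |(a • x + b • z) i| ^ (p - 2) * w i ^ 2 ≤
      (a * (|x i| ^ (p - 2)) + b * (|z i| ^ (p - 2))) * w i ^ 2 := by
    intro i
    have hxi : 0 < |x i| := abs_pos.mpr (by intro h; have := hx1 i; rw [h] at this; simp at this)
    have hzi : 0 < |z i| := abs_pos.mpr (by intro h; have := hz1 i; rw [h] at this; simp at this)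
    have heq : |(a • x + b • z) i| = a * |x i| + b * |z i| := by
      rw [habs _ hsum i, habs _ hx1 i, habs _ hz1 i]
      simp [PiLp.add_apply, PiLp.smul_apply, smul_eq_mul]; ring
    rw [heq]
    exact mul_le_mul_of_nonneg_right (rpow_convex_aux hq hxi hzi ha hb hab) (sq_nonneg _)
  have hsumle : ∑ i, |(a • x + b • z) i| ^ (p - 2) * w i ^ 2 ≤
      a * (∑ i, |x i| ^ (p - 2) * w i ^ 2) + b * (∑ i, |z i| ^ (p - 2) * w i ^ 2) := by
    rw [Finset.mul_sum, Finset.mul_sum, ← Finset.sum_add_distrib]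
    refine Finset.sum_le_sum fun i _ => ?_
    have := hterm i
    nlinarith [this]
  have hc : lam * p * (p - 1) ≤ 0 := by
    have h1 : 0 < lam * p := mul_pos hlam hp0
    nlinarith
  have hx2' := hx2 w hw
  have hz2' := hz2 w hw
  set c := lam * p * (p - 1) with hcdef
  set Sx := ∑ i, |x i| ^ (p - 2) * w i ^ 2 with hSx
  set Sz := ∑ i, |z i| ^ (p - 2) * w i ^ 2 with hSz
  have key : 2 * ‖B w‖ ^ 2 + c * (a * Sx + b * Sz)
      = a * (2 * ‖B w‖ ^ 2 + c * Sx) + b * (2 * ‖B w‖ ^ 2 + c * Sz) := by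
    linear_combination (-2 * ‖B w‖ ^ 2) * hab
  have hcomb : 0 < 2 * ‖B w‖ ^ 2 + c * (a * Sx + b * Sz) := by
    rw [key]
    rcases ha.lt_or_eq with ha' | ha'
    · have h1 : 0 < a * (2 * ‖B w‖ ^ 2 + c * Sx) := mul_pos ha' hx2'
      have h2 : 0 ≤ b * (2 * ‖B w‖ ^ 2 + c * Sz) := mul_nonneg hb hz2'.le
      linarith
    · have hb' : b = 1 := by linarith
      rw [← ha', hb']; simpa using hz2'
  have hmul : c * (a * Sx + b * Sz) ≤ c * ∑ i, |(a • x + b • z) i| ^ (p - 2) * w i ^ 2 :=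
    mul_le_mul_of_nonpos_left hsumle hc
  linarith
end

section
/- Let β > 0 and let {ε_k}_{k∈ℕ} be nonnegative reals with ε_k → 0. Let {x^k} ⊆ ℝ^n be a sequence satisfying the inexact relative error condition (H2°): for each k, there exists w^{k+1} ∈ ℝ^n with w^{k+1}_i = 2(Aᵀ(Ax^{k+1} − b))_i + λp|x^{k+1}_i|^{p−1}sign(x^{k+1}_i) for every i ∈ supp(x^{k+1}) and ‖w^{k+1}‖ ≤ β‖x^{k+1} − x^k‖ + ε_k. Suppose {x^k} converges to x* ∈ ℝ^n. Then there exists N ∈ ℕ such that supp(x^k) = supp(x*) for each k ≥ N. -/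
/-! On the support of `x^{k+1}`, (H2°) gives
`λ p |x^{k+1}_i|^{p-1} = |w^{k+1}_i - 2(Aᵀ(Ax^{k+1} - b))_i|`, and the right side stays bounded
because `w^{k+1} → 0` and `x^{k+1}` converges. Since `|t|^{p-1} → ∞` as `t → 0`, a coordinate with
`x*_i = 0` can be nonzero only finitely often; a coordinate with `x*_i ≠ 0` is eventually nonzero
by continuity. -/

open scoped RealInnerProductSpace

open Filter Topology

lemma eventually_eq_zero_of_abs_rpow_le_of_tendsto {α : Type*} {l : Filter α} {u g : α → ℝ}
    {q a : ℝ} (hq : q < 0) (hu : Tendsto u l (𝓝 0)) (hg : Tendsto g l (𝓝 a))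
    (hug : ∀ᶠ k in l, u k ≠ 0 → |u k| ^ q ≤ g k) :
    ∀ᶠ k in l, u k = 0 := by
  by_contra h
  have : (l ⊓ 𝓟 {k | u k ≠ 0}).NeBot := frequently_iff_neBot.1 (not_eventually.1 h)
  have hu' : Tendsto u (l ⊓ 𝓟 {k | u k ≠ 0}) (𝓝[≠] 0) :=
    tendsto_nhdsWithin_iff.2
      ⟨hu.mono_left inf_le_left, eventually_inf_principal.2 (.of_forall fun _ => id)⟩
  have hpow : Tendsto (fun k => |u k| ^ q) (l ⊓ 𝓟 {k | u k ≠ 0}) atTop :=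
    (tendsto_rpow_neg_nhdsGT_zero hq).comp (tendsto_norm_nhdsNE_zero.comp hu')
  have hg_top : Tendsto g (l ⊓ 𝓟 {k | u k ≠ 0}) atTop :=
    tendsto_atTop_mono' _ (eventually_inf_principal.2 hug) hpow
  exact not_tendsto_atTop_of_tendsto_nhds (hg.mono_left inf_le_left) hg_top

lemma abs_rpow_le_of_eq_add_mul_sign {c q t v T : ℝ} (hc : 0 < c) (ht : t ≠ 0)
    (h : v = T + c * |t| ^ q * Real.sign t) : |t| ^ q ≤ (|v| + |T|) / c := by
  have hsign : |Real.sign t| = 1 := by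
    rcases Real.sign_apply_eq_of_ne_zero t ht with h | h <;> simp [h]
  rw [le_div_iff₀' hc]
  calc c * |t| ^ q = |v - T| := by
        rw [h, add_sub_cancel_left, abs_mul, hsign, mul_one,
          abs_of_nonneg (a := c * |t| ^ q) (by positivity)]
    _ ≤ |v| + |T| := abs_sub _ _

lemma eventually_setOf_ne_zero_eq {α ι : Type*} [Finite ι] {l : Filter α} {x : α → ι → ℝ}
    {y : ι → ℝ} (hx : ∀ i, Tendsto (fun k => x k i) l (𝓝 (y i)))
    (hzero : ∀ i, y i = 0 → ∀ᶠ k in l, x k i = 0) :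
    ∀ᶠ k in l, {i | x k i ≠ 0} = {i | y i ≠ 0} := by
  have hcoord : ∀ i, ∀ᶠ k in l, (x k i ≠ 0 ↔ y i ≠ 0) := by
    intro i
    by_cases hi : y i = 0
    · filter_upwards [hzero i hi] with k hk using by simp [hk, hi]
    · filter_upwards [(hx i).eventually_ne hi] with k hk using iff_of_true hk hi
  filter_upwards [eventually_all.2 hcoord] with k hk using Set.ext hk

theorem stmt7_general (n m : ℕ) (p lam : ℝ) (hp0 : 0 < p) (hp1 : p < 1) (hlam : 0 < lam)
    (A : EuclideanSpace ℝ (Fin n) →L[ℝ] EuclideanSpace ℝ (Fin m))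
    (b : EuclideanSpace ℝ (Fin m))
    (β : ℝ) (ε : ℕ → ℝ)
    (hε0 : Filter.Tendsto ε Filter.atTop (nhds 0))
    (x : ℕ → EuclideanSpace ℝ (Fin n))
    (hH2 : ∀ k, ∃ w : EuclideanSpace ℝ (Fin n),
      (∀ i, x (k + 1) i ≠ 0 →
        w i = 2 * ⟪A (EuclideanSpace.single i 1), A (x (k + 1)) - b⟫
          + lam * p * |x (k + 1) i| ^ (p - 1) * Real.sign (x (k + 1) i)) ∧
      ‖w‖ ≤ β * ‖x (k + 1) - x k‖ + ε k)
    (xs : EuclideanSpace ℝ (Fin n))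
    (hconv : Filter.Tendsto x Filter.atTop (nhds xs)) :
    ∃ N : ℕ, ∀ k ≥ N, {i : Fin n | x k i ≠ 0} = {i : Fin n | xs i ≠ 0} := by
  choose w hw_eq hw_le using hH2
  have hshift : Tendsto (fun k => x (k + 1)) atTop (𝓝 xs) :=
    hconv.comp (tendsto_add_atTop_nat 1)
  have hcoord : ∀ i, Tendsto (fun k => x (k + 1) i) atTop (𝓝 (xs i)) := fun i =>
    ((PiLp.continuous_apply 2 _ i).tendsto xs).comp hshift
  have hw : Tendsto (fun k => ‖w k‖) atTop (𝓝 0) := by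
    have hbound : Tendsto (fun k => β * ‖x (k + 1) - x k‖ + ε k) atTop (𝓝 0) := by
      simpa using ((hshift.sub hconv).norm.const_mul β).add hε0
    exact squeeze_zero (fun _ => norm_nonneg _) hw_le hbound
  have hzero : ∀ i, xs i = 0 → ∀ᶠ k in atTop, x (k + 1) i = 0 := by
    intro i hi
    have hT : Tendsto (fun k => 2 * ⟪A (EuclideanSpace.single i 1), A (x (k + 1)) - b⟫) atTop
        (𝓝 (2 * ⟪A (EuclideanSpace.single i 1), A xs - b⟫)) :=
      (tendsto_const_nhds.inner (((A.continuous.tendsto xs).comp hshift).sub_const b)).const_mul 2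
    refine eventually_eq_zero_of_abs_rpow_le_of_tendsto (sub_neg.2 hp1) (hi ▸ hcoord i)
      ((hw.add hT.abs).div_const (lam * p)) (.of_forall fun k hk => ?_)
    refine (abs_rpow_le_of_eq_add_mul_sign (mul_pos hlam hp0) hk (hw_eq k i hk)).trans ?_
    gcongr
    exact PiLp.norm_apply_le (w k) i
  obtain ⟨N, hN⟩ := eventually_atTop.1 (eventually_setOf_ne_zero_eq hcoord hzero)
  refine ⟨N + 1, fun k hk => ?_⟩
  obtain ⟨j, rfl⟩ : ∃ j, k = j + 1 := ⟨k - 1, by omega⟩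
  exact hN j (by omega)

/-- Proposition 4.1(ii): if `β > 0`, `ε_k → 0`, the sequence `{x^k}` satisfies
the inexact relative error condition (H2°) — for each `k` there is `w^{k+1}` whose components on
`supp(x^{k+1})` are the partial derivatives `2(Aᵀ(Ax^{k+1} - b))_i + λ p |x^{k+1}_i|^{p-1}
sign(x^{k+1}_i)` and `‖w^{k+1}‖ ≤ β ‖x^{k+1} - x^k‖ + ε_k` — and `x^k → x*`, then there is `N`
with `supp(x^k) = supp(x*)` for all `k ≥ N`. -/
theorem stmt7 (n m : ℕ) (p lam : ℝ) (hp0 : 0 < p) (hp1 : p < 1) (hlam : 0 < lam)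
    (A : EuclideanSpace ℝ (Fin n) →L[ℝ] EuclideanSpace ℝ (Fin m))
    (b : EuclideanSpace ℝ (Fin m))
    (β : ℝ) (hβ : 0 < β) (ε : ℕ → ℝ) (hε : ∀ k, 0 ≤ ε k)
    (hε0 : Filter.Tendsto ε Filter.atTop (nhds 0))
    (x : ℕ → EuclideanSpace ℝ (Fin n))
    (hH2 : ∀ k, ∃ w : EuclideanSpace ℝ (Fin n),
      (∀ i, x (k + 1) i ≠ 0 →
        w i = 2 * ⟪A (EuclideanSpace.single i 1), A (x (k + 1)) - b⟫
          + lam * p * |x (k + 1) i| ^ (p - 1) * Real.sign (x (k + 1) i)) ∧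
      ‖w‖ ≤ β * ‖x (k + 1) - x k‖ + ε k)
    (xs : EuclideanSpace ℝ (Fin n))
    (hconv : Filter.Tendsto x Filter.atTop (nhds xs)) :
    ∃ N : ℕ, ∀ k ≥ N, {i : Fin n | x k i ≠ 0} = {i : Fin n | xs i ≠ 0} :=
  stmt7_general n m p lam hp0 hp1 hlam A b β ε hε0 x hH2 xs hconv
end

section
/- Let v > 0, ε ≥ 0, x ∈ ℝ^n, ξ ∈ ℝ^n, and let z ∈ P_{v,ε}(x − v(∇H(x) + ξ)). Then F(z) − F(x) ≤ −(1/(2v) − ‖A‖²)‖z − x‖² − ⟨z − x, ξ⟩ + ε. -/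
open scoped RealInnerProductSpace

/-!
Expanding the square in the proximal objective, the `ε`-optimality of `z` tested against `y = x`
bounds the decrease of the penalty by `ε - ‖z - x‖² / (2v) - ⟪z - x, ∇H(x) + ξ⟫`. The least-squares
term is quadratic with Hessian `2 A†A ≤ 2 ‖A‖²`, so it grows by at most
`⟪z - x, ∇H(x)⟫ + ‖A‖² ‖z - x‖²`; adding the two bounds, the gradient terms cancel.
-/

section

variable {E F : Type*} [NormedAddCommGroup E] [InnerProductSpace ℝ E] [CompleteSpace E]
  [NormedAddCommGroup F] [InnerProductSpace ℝ F] [CompleteSpace F]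

theorem norm_apply_sub_sq_le (A : E →L[ℝ] F) (b : F) (x z : E) :
    ‖A z - b‖ ^ 2 ≤
      ‖A x - b‖ ^ 2 + 2 * ⟪z - x, ContinuousLinearMap.adjoint A (A x - b)⟫ + ‖A‖ ^ 2 * ‖z - x‖ ^ 2 := by
  have hsplit : A z - b = A (z - x) + (A x - b) := by rw [map_sub]; abel
  have hop : ‖A (z - x)‖ ^ 2 ≤ ‖A‖ ^ 2 * ‖z - x‖ ^ 2 := by
    rw [← mul_pow]
    exact pow_le_pow_left₀ (norm_nonneg _) (A.le_opNorm _) 2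
  rw [hsplit, norm_add_sq_real, ContinuousLinearMap.adjoint_inner_right]
  linarith

end

theorem sub_le_of_forall_le_prox {E : Type*} [NormedAddCommGroup E] [InnerProductSpace ℝ E]
    (g : E → ℝ) {v ε : ℝ} (hv : v ≠ 0) (x w z : E)
    (hz : ∀ y, g z + 1 / (2 * v) * ‖z - (x - v • w)‖ ^ 2
      ≤ ε + g y + 1 / (2 * v) * ‖y - (x - v • w)‖ ^ 2) :
    g z - g x ≤ ε - 1 / (2 * v) * ‖z - x‖ ^ 2 - ⟪z - x, w⟫ := by
  have hzx := hz x
  rw [show z - (x - v • w) = (z - x) + v • w by abel, show x - (x - v • w) = v • w by abel,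
    norm_add_sq_real, real_inner_smul_right] at hzx
  have hcross : 1 / (2 * v) * (2 * (v * ⟪z - x, w⟫)) = ⟪z - x, w⟫ := by field_simp
  nlinarith

theorem stmt11_general (n m : ℕ) (p lam : ℝ)
    (A : EuclideanSpace ℝ (Fin n) →L[ℝ] EuclideanSpace ℝ (Fin m))
    (b : EuclideanSpace ℝ (Fin m))
    (F : EuclideanSpace ℝ (Fin n) → ℝ)
    (hF : ∀ x, F x = ‖A x - b‖ ^ 2 + lam * ∑ i, |x i| ^ p)
    (v ε : ℝ) (hv : 0 < v)
    (x ξ z : EuclideanSpace ℝ (Fin n))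
    (hz : ∀ y : EuclideanSpace ℝ (Fin n),
      lam * ∑ i, |z i| ^ p +
          1 / (2 * v) * ‖z - (x - v • ((2 : ℝ) • (ContinuousLinearMap.adjoint A) (A x - b) + ξ))‖ ^ 2
        ≤ ε + lam * ∑ i, |y i| ^ p +
          1 / (2 * v) * ‖y - (x - v • ((2 : ℝ) • (ContinuousLinearMap.adjoint A) (A x - b) + ξ))‖ ^ 2) :
    F z - F x ≤ -(1 / (2 * v) - ‖A‖ ^ 2) * ‖z - x‖ ^ 2 - ⟪z - x, ξ⟫ + ε := by
  have hpenalty := sub_le_of_forall_le_prox (fun y => lam * ∑ i, |y i| ^ p) hv.ne' x _ z hz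
  have hquad := norm_apply_sub_sq_le A b x z
  rw [inner_add_right, real_inner_smul_right] at hpenalty
  rw [hF z, hF x]
  linarith

/-- Proposition 5.1(i): for `v > 0`, `ε ≥ 0` and
`z ∈ P_{v,ε}(x - v(∇H(x) + ξ))` — an `ε`-approximate minimizer of
`y ↦ λ ∑ |y_i|^p + (1/(2v)) ‖y - (x - v(2Aᵀ(Ax - b) + ξ))‖²` — one has
`F(z) - F(x) ≤ -(1/(2v) - ‖A‖²) ‖z - x‖² - ⟨z - x, ξ⟩ + ε`. -/
theorem stmt11 (n m : ℕ) (p lam : ℝ) (hp0 : 0 < p) (hp1 : p < 1) (hlam : 0 < lam)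
    (A : EuclideanSpace ℝ (Fin n) →L[ℝ] EuclideanSpace ℝ (Fin m))
    (b : EuclideanSpace ℝ (Fin m))
    (F : EuclideanSpace ℝ (Fin n) → ℝ)
    (hF : ∀ x, F x = ‖A x - b‖ ^ 2 + lam * ∑ i, |x i| ^ p)
    (v ε : ℝ) (hv : 0 < v) (hε : 0 ≤ ε)
    (x ξ z : EuclideanSpace ℝ (Fin n))
    (hz : ∀ y : EuclideanSpace ℝ (Fin n),
      lam * ∑ i, |z i| ^ p +
          1 / (2 * v) * ‖z - (x - v • ((2 : ℝ) • (ContinuousLinearMap.adjoint A) (A x - b) + ξ))‖ ^ 2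
        ≤ ε + lam * ∑ i, |y i| ^ p +
          1 / (2 * v) * ‖y - (x - v • ((2 : ℝ) • (ContinuousLinearMap.adjoint A) (A x - b) + ξ))‖ ^ 2) :
    F z - F x ≤ -(1 / (2 * v) - ‖A‖ ^ 2) * ‖z - x‖ ^ 2 - ⟪z - x, ξ⟫ + ε :=
  stmt11_general n m p lam A b F hF v ε hv x ξ z hz
end

section
/- Let v > 0, x ∈ ℝ^n, and let y ∈ P_v(x − v∇H(x)) be an exact minimizer of the proximal subproblem. Then for each index i, if y_i ≠ 0 then |y_i| ≥ (vλp(1−p))^{1/(2−p)}. -/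
/-!
The objective defining `P_v(z)` is separable, so each coordinate `t = y_i` of a minimizer
minimizes the scalar function `s ↦ λ|s|^p + (s - z_i)²/(2v)`. For `t > 0` this function is
differentiable at `t`, and the first-order condition `z_i = t + vλp t^(p-1)` turned into the
comparison with the competitor `s = 0` gives `2vλ(1-p) t^p ≤ t²`, i.e.
`t^(2-p) ≥ 2vλ(1-p) ≥ vλp(1-p)`. Negative `t` reduce to this by the symmetry `s ↦ -s`.
-/

open Finset

/-- The summand of the objective defining `P_v(z)` for one coordinate, with `w = z_i`. -/
noncomputable def proxObjective (lam p v w s : ℝ) : ℝ := lam * |s| ^ p + 1 / (2 * v) * (s - w) ^ 2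

theorem le_apply_of_forall_sum_le_sum {ι α β : Type*} [Fintype ι] [DecidableEq ι]
    [AddCommMonoid β] [PartialOrder β] [IsOrderedCancelAddMonoid β]
    (φ : ι → α → β) {y : ι → α} (hy : ∀ u : ι → α, ∑ j, φ j (y j) ≤ ∑ j, φ j (u j))
    (i : ι) (s : α) : φ i (y i) ≤ φ i s := by
  have h := hy (Function.update y i s)
  rw [sum_congr rfl fun j _ => Function.apply_update φ y i s j, sum_update_of_mem (mem_univ i),
    sum_eq_add_sum_sdiff_singleton_of_mem (mem_univ i)] at h
  exact le_of_add_le_add_right h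

theorem proxObjective_neg (lam p v w s : ℝ) :
    proxObjective lam p v (-w) (-s) = proxObjective lam p v w s := by
  simp only [proxObjective, abs_neg]
  ring

theorem hasDerivAt_proxObjective (lam p v w : ℝ) {t : ℝ} (ht : 0 < t) :
    HasDerivAt (proxObjective lam p v w)
      (lam * (p * t ^ (p - 1)) + 1 / (2 * v) * (2 * (t - w))) t := by
  have hrpow : HasDerivAt (fun s : ℝ => lam * s ^ p + 1 / (2 * v) * (s - w) ^ 2)
      (lam * (p * t ^ (p - 1)) + 1 / (2 * v) * (2 * (t - w))) t := by
    have hsq : HasDerivAt (fun s : ℝ => (s - w) ^ 2) (2 * (t - w)) t := by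
      simpa using ((hasDerivAt_id t).sub_const w).fun_pow 2
    exact ((Real.hasDerivAt_rpow_const (Or.inl ht.ne')).const_mul lam).add (hsq.const_mul _)
  refine hrpow.congr_of_eventuallyEq ?_
  filter_upwards [eventually_gt_nhds ht] with s hs
  rw [proxObjective, abs_of_pos hs]

theorem le_rpow_two_sub_of_forall_proxObjective_le {lam p v w t : ℝ} (hp0 : 0 < p) (hv : 0 < v)
    (ht : 0 < t) (hmin : ∀ s, proxObjective lam p v w t ≤ proxObjective lam p v w s) :
    2 * v * lam * (1 - p) ≤ t ^ (2 - p) := by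
  have hfoc : w = t + v * lam * p * t ^ (p - 1) := by
    have h := IsLocalMin.hasDerivAt_eq_zero (Filter.Eventually.of_forall hmin)
      (hasDerivAt_proxObjective lam p v w ht)
    field_simp at h
    linarith
  have hzero := hmin 0
  simp only [proxObjective, abs_of_pos ht, abs_zero, Real.zero_rpow hp0.ne', hfoc] at hzero
  have hcmp : 2 * v * lam * (1 - p) * t ^ p ≤ t ^ 2 := by
    have hpow : t ^ (p - 1) * t = t ^ p := by
      rw [← Real.rpow_add_one ht.ne', sub_add_cancel]
    field_simp at hzero
    linear_combination hzero + 2 * lam * v * p * hpow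
  rwa [Real.rpow_sub ht, Real.rpow_two, le_div_iff₀ (Real.rpow_pos_of_pos ht p)]

theorem rpow_one_div_le_abs_of_forall_proxObjective_le {lam p v w t : ℝ} (hp0 : 0 < p)
    (hp1 : p < 1) (hlam : 0 < lam) (hv : 0 < v) (ht : t ≠ 0)
    (hmin : ∀ s, proxObjective lam p v w t ≤ proxObjective lam p v w s) :
    (v * lam * p * (1 - p)) ^ (1 / (2 - p)) ≤ |t| := by
  have hbound : 2 * v * lam * (1 - p) ≤ |t| ^ (2 - p) := by
    rcases ht.lt_or_gt with hneg | hpos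
    · rw [abs_of_neg hneg]
      refine le_rpow_two_sub_of_forall_proxObjective_le (w := -w) hp0 hv (neg_pos.2 hneg) ?_
      intro s
      have h := hmin (-s)
      rwa [← proxObjective_neg lam p v w, ← proxObjective_neg lam p v w (-s), neg_neg] at h
    · rw [abs_of_pos hpos]
      exact le_rpow_two_sub_of_forall_proxObjective_le hp0 hv hpos hmin
  rw [one_div, Real.rpow_inv_le_iff_of_pos (by positivity) (abs_nonneg t) (by linarith)]
  calc v * lam * p * (1 - p) ≤ 2 * v * lam * (1 - p) := by
        have : 0 < v * lam * (1 - p) := by have := sub_pos.2 hp1; positivity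
        nlinarith
    _ ≤ |t| ^ (2 - p) := hbound

/-- Proposition 5.1(ii), lower bound for nonzero components of the proximal
operator: for `v > 0` and `y ∈ P_v(x - v∇H(x))`, an exact minimizer of
`u ↦ λ ∑ |u_i|^p + (1/(2v)) ‖u - (x - 2v Aᵀ(Ax - b))‖²`, every nonzero component of `y`
satisfies `|y_i| ≥ (vλp(1-p))^{1/(2-p)}`. -/
theorem stmt12 (n m : ℕ) (p lam : ℝ) (hp0 : 0 < p) (hp1 : p < 1) (hlam : 0 < lam)
    (A : EuclideanSpace ℝ (Fin n) →L[ℝ] EuclideanSpace ℝ (Fin m))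
    (b : EuclideanSpace ℝ (Fin m))
    (v : ℝ) (hv : 0 < v)
    (x y : EuclideanSpace ℝ (Fin n))
    (hy : ∀ u : EuclideanSpace ℝ (Fin n),
      lam * ∑ i, |y i| ^ p +
          1 / (2 * v) * ‖y - (x - v • ((2 : ℝ) • (ContinuousLinearMap.adjoint A) (A x - b)))‖ ^ 2
        ≤ lam * ∑ i, |u i| ^ p +
          1 / (2 * v) * ‖u - (x - v • ((2 : ℝ) • (ContinuousLinearMap.adjoint A) (A x - b)))‖ ^ 2) :
    ∀ i, y i ≠ 0 → (v * lam * p * (1 - p)) ^ ((1 : ℝ) / (2 - p)) ≤ |y i| := by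
  intro i hyi
  set c := x - v • ((2 : ℝ) • (ContinuousLinearMap.adjoint A) (A x - b))
  have hsep : ∀ u : EuclideanSpace ℝ (Fin n),
      lam * ∑ j, |u j| ^ p + 1 / (2 * v) * ‖u - c‖ ^ 2 = ∑ j, proxObjective lam p v (c j) (u j) := by
    intro u
    simp only [EuclideanSpace.real_norm_sq_eq, PiLp.sub_apply, mul_sum, ← sum_add_distrib,
      proxObjective]
  refine rpow_one_div_le_abs_of_forall_proxObjective_le (w := c i) hp0 hp1 hlam hv hyi ?_
  refine le_apply_of_forall_sum_le_sum (fun j => proxObjective lam p v (c j)) (fun u => ?_) i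
  simpa only [hsep] using hy (WithLp.toLp 2 u)
end

section
/- Let α, β > 0 and let {ε_k}_{k∈ℕ} be nonnegative reals with ∑_{k=0}^∞ ε_k² < +∞. Let {x^k} ⊆ ℓ² with F(x^0) < +∞ satisfy, for every k ∈ ℕ, (H1°): F(x^{k+1}) ≤ F(x^k) − α‖x^{k+1} − x^k‖² + ε_k², and (H2°): there exists w^{k+1} ∈ ℓ² with w^{k+1}_i = 2⟨A e_i, A x^{k+1} − b⟩ + λ_i p|x^{k+1}_i|^{p−1}sign(x^{k+1}_i) for every i ∈ supp(x^{k+1}) and ‖w^{k+1}‖ ≤ β‖x^{k+1} − x^k‖ + ε_k. Then there exist N ∈ ℕ and a finite index set J ⊆ ℕ such that supp(x^k) = J for every k ≥ N. -/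
/-!
Summing (H1°) shows that `F(x^k)` stays bounded by `F(x⁰) + ∑ ε_k²` and that
`∑ ‖x^{k+1} - x^k‖² < ∞`; hence the steps and the errors `ε_k` tend to `0`, and the residuals
`‖Ax^k - b‖` are bounded. On the support of `x^{k+1}` the coordinate `w_i` of (H2°) is a bounded
smooth part plus `λ_i p |x_i|^{p-1} sign x_i`, which blows up as `x_i → 0` because `p < 1`. Once
`‖w‖ < 1`, every nonzero coordinate therefore has modulus at least a fixed `δ > 0`, so there are
finitely many of them (`x^k ∈ ℓ²`), and once the steps are shorter than `δ` no coordinate can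
enter or leave the support.
-/

open Filter Finset Topology
open scoped RealInnerProductSpace ENNReal

namespace ENNReal

variable {f d e : ℕ → ℝ≥0∞}

theorem sum_range_add_le_of_le_add (h : ∀ k, f (k + 1) + d k ≤ f k + e k) (n : ℕ) :
    (∑ k ∈ range n, d k) + f n ≤ f 0 + ∑ k ∈ range n, e k := by
  induction n with
  | zero => simp
  | succ n ih =>
    calc (∑ k ∈ range (n + 1), d k) + f (n + 1)
        = (∑ k ∈ range n, d k) + (f (n + 1) + d n) := by rw [sum_range_succ]; ring
      _ ≤ (∑ k ∈ range n, d k) + (f n + e n) := add_le_add le_rfl (h n)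
      _ = ((∑ k ∈ range n, d k) + f n) + e n := by ring
      _ ≤ (f 0 + ∑ k ∈ range n, e k) + e n := by gcongr
      _ = f 0 + ∑ k ∈ range (n + 1), e k := by rw [sum_range_succ]; ring

theorem le_add_tsum_of_le_add (h : ∀ k, f (k + 1) + d k ≤ f k + e k) (n : ℕ) :
    f n ≤ f 0 + ∑' k, e k :=
  le_add_self.trans <| (sum_range_add_le_of_le_add h n).trans <|
    add_le_add_right (ENNReal.sum_le_tsum _) _

theorem tsum_le_add_tsum_of_le_add (h : ∀ k, f (k + 1) + d k ≤ f k + e k) :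
    ∑' k, d k ≤ f 0 + ∑' k, e k :=
  tsum_le_of_sum_range_le fun n => le_self_add.trans <|
    (sum_range_add_le_of_le_add h n).trans <| add_le_add_right (ENNReal.sum_le_tsum _) _

end ENNReal

theorem summable_of_tsum_ofReal_ne_top {α : Type*} {g : α → ℝ} (hg : ∀ a, 0 ≤ g a)
    (h : ∑' a, ENNReal.ofReal (g a) ≠ ⊤) : Summable g := by
  simpa [ENNReal.toReal_ofReal (hg _)] using ENNReal.summable_toReal h

theorem tendsto_zero_of_summable_sq {u : ℕ → ℝ} (hu : Summable fun k => u k ^ 2) :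
    Tendsto u atTop (𝓝 0) := by
  rw [tendsto_zero_iff_abs_tendsto_zero]
  simpa [Real.sqrt_sq_eq_abs, Function.comp_def] using hu.tendsto_atTop_zero.sqrt

/-- The threshold `δ` solves `lb p δ^{p-1} = C + 1`: below it the derivative of `l |t|^p`
outweighs any term of size at most `C` by more than `1`. -/
theorem lt_abs_of_abs_add_mul_rpow_mul_sign_lt {a C l lb p t : ℝ} (hp0 : 0 < p) (hp1 : p < 1)
    (hlb : 0 < lb) (hl : lb ≤ l) (ha : |a| ≤ C) (ht : t ≠ 0)
    (h : |a + l * p * |t| ^ (p - 1) * Real.sign t| < 1) :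
    ((C + 1) / (lb * p)) ^ (p - 1)⁻¹ < |t| := by
  have hC : 0 ≤ C := (abs_nonneg a).trans ha
  have ht0 : 0 < |t| := abs_pos.2 ht
  have hl0 : 0 < l := hlb.trans_le hl
  have habs_sign : |Real.sign t| = 1 := by
    rcases ht.lt_or_gt with hneg | hpos
    · simp [Real.sign_of_neg hneg]
    · simp [Real.sign_of_pos hpos]
  set s := l * p * |t| ^ (p - 1) * Real.sign t
  have hs : |s| = l * p * |t| ^ (p - 1) := by
    rw [abs_mul, habs_sign, mul_one, abs_of_nonneg (by positivity)]
  have hlt : |t| ^ (p - 1) < (C + 1) / (lb * p) := by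
    rw [lt_div_iff₀ (by positivity)]
    calc |t| ^ (p - 1) * (lb * p) ≤ l * p * |t| ^ (p - 1) := by
          rw [mul_comm]; gcongr
      _ = |(a + s) - a| := by rw [add_sub_cancel_left, hs]
      _ ≤ |a + s| + |a| := abs_sub _ _
      _ < 1 + C := add_lt_add_of_lt_of_le h ha
      _ = C + 1 := add_comm _ _
  exact (Real.rpow_inv_lt_iff_of_neg (by positivity) ht0 (by linarith)).2 hlt

theorem support_eq_of_abs_sub_lt {ι : Type*} {u v : ι → ℝ} {δ : ℝ}
    (hu : ∀ i, u i ≠ 0 → δ ≤ |u i|) (hv : ∀ i, v i ≠ 0 → δ ≤ |v i|)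
    (huv : ∀ i, |u i - v i| < δ) : Function.support u = Function.support v := by
  ext i
  simp only [Function.mem_support]
  constructor
  · intro hui hvi
    have := huv i
    rw [hvi, sub_zero] at this
    linarith [hu i hui]
  · intro hvi hui
    have := huv i
    rw [hui, zero_sub, abs_neg] at this
    linarith [hv i hvi]

namespace lp

variable {ι : Type*}

theorem abs_apply_le_norm (y : lp (fun _ : ι => ℝ) 2) (i : ι) : |y i| ≤ ‖y‖ := by
  simpa using norm_apply_le_norm two_ne_zero y i

theorem finite_setOf_le_norm_apply {E : ι → Type*} [∀ i, NormedAddCommGroup (E i)]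
    {p : ℝ≥0∞} (hp : 0 < p.toReal) (y : lp E p) {δ : ℝ} (hδ : 0 < δ) :
    {i | δ ≤ ‖y i‖}.Finite := by
  have hsmall := ((memℓp_gen_iff hp).1 y.2).tendsto_cofinite_zero.eventually_lt_const
    (Real.rpow_pos_of_pos hδ p.toReal)
  refine (eventually_cofinite.1 hsmall).subset fun i hi => ?_
  exact not_lt.2 (Real.rpow_le_rpow hδ.le hi hp.le)

theorem abs_inner_apply_single_le [DecidableEq ι] {H : Type*} [NormedAddCommGroup H] [InnerProductSpace ℝ H]
    (A : lp (fun _ : ι => ℝ) 2 →L[ℝ] H) (i : ι) (z : H) :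
    |⟪A (lp.single 2 i (1 : ℝ)), z⟫| ≤ ‖A‖ * ‖z‖ := by
  refine (abs_real_inner_le_norm _ _).trans (mul_le_mul_of_nonneg_right ?_ (norm_nonneg z))
  simpa using A.le_opNorm_of_le (lp.norm_single (E := fun _ : ι => ℝ) (p := 2) (by norm_num) i 1).le

theorem exists_support_eventually_eq {y : ℕ → lp (fun _ : ι => ℝ) 2} {δ : ℝ} (hδ : 0 < δ)
    (hsep : ∀ᶠ k in atTop, ∀ i, y k i ≠ 0 → δ ≤ |y k i|)
    (hstep : ∀ᶠ k in atTop, ‖y (k + 1) - y k‖ < δ) :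
    ∃ N, ∃ J : Finset ι, ∀ k ≥ N, Function.support (y k) = J := by
  obtain ⟨N, hN⟩ := eventually_atTop.1 (hsep.and hstep)
  have hconst : ∀ k ≥ N, Function.support (y k) = Function.support (y N) := by
    intro k hk
    induction k, hk using Nat.le_induction with
    | base => rfl
    | succ k hk ih =>
      rw [← ih]
      exact support_eq_of_abs_sub_lt (hN (k + 1) (by omega)).1 (hN k hk).1 fun i =>
        (abs_apply_le_norm (y (k + 1) - y k) i).trans_lt (hN k hk).2
  have hfin : (Function.support (y N)).Finite :=
    (finite_setOf_le_norm_apply (by norm_num) (y N) hδ).subset fun i hi => by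
      simpa using (hN N le_rfl).1 i hi
  exact ⟨N, hfin.toFinset, fun k hk => by rw [hconst k hk, Set.Finite.coe_toFinset]⟩

end lp

theorem stmt16_general (H : Type*) [NormedAddCommGroup H] [InnerProductSpace ℝ H]
    (A : lp (fun _ : ℕ => ℝ) 2 →L[ℝ] H) (b : H)
    (p : ℝ) (hp0 : 0 < p) (hp1 : p < 1)
    (lam : ℕ → ℝ) (lamlb : ℝ) (hlb : 0 < lamlb) (hlam : ∀ i, lamlb ≤ lam i)
    (F : lp (fun _ : ℕ => ℝ) 2 → ℝ≥0∞)
    (hF : ∀ x, F x = ENNReal.ofReal (‖A x - b‖ ^ 2) + ∑' i, ENNReal.ofReal (lam i * |x i| ^ p))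
    (α β : ℝ) (hα : 0 < α)
    (ε : ℕ → ℝ) (hsum : Summable fun k => ε k ^ 2)
    (x : ℕ → lp (fun _ : ℕ => ℝ) 2) (hF0 : F (x 0) < ⊤)
    (hH1 : ∀ k, F (x (k + 1)) + ENNReal.ofReal (α * ‖x (k + 1) - x k‖ ^ 2)
      ≤ F (x k) + ENNReal.ofReal (ε k ^ 2))
    (hH2 : ∀ k, ∃ w : lp (fun _ : ℕ => ℝ) 2,
      (∀ i, x (k + 1) i ≠ 0 →
        w i = 2 * ⟪A (lp.single 2 i (1 : ℝ)), A (x (k + 1)) - b⟫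
          + lam i * p * |x (k + 1) i| ^ (p - 1) * Real.sign (x (k + 1) i)) ∧
      ‖w‖ ≤ β * ‖x (k + 1) - x k‖ + ε k) :
    ∃ N : ℕ, ∃ J : Finset ℕ, ∀ k ≥ N, {i : ℕ | x k i ≠ 0} = ↑J := by
  set M := F (x 0) + ∑' k, ENNReal.ofReal (ε k ^ 2)
  have hM : M ≠ ⊤ := ENNReal.add_ne_top.2 ⟨hF0.ne, hsum.tsum_ofReal_ne_top⟩
  have hstep : Tendsto (fun k => ‖x (k + 1) - x k‖) atTop (𝓝 0) := by
    have hsq := summable_of_tsum_ofReal_ne_top (fun k => by positivity)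
      (ne_top_of_le_ne_top hM (ENNReal.tsum_le_add_tsum_of_le_add hH1))
    refine tendsto_zero_of_summable_sq ((hsq.mul_left α⁻¹).congr fun k => ?_)
    field_simp
  have hres : ∀ k, ‖A (x k) - b‖ ≤ √M.toReal := fun k =>
    Real.le_sqrt_of_sq_le <| (ENNReal.ofReal_le_iff_le_toReal hM).1 <|
      (hF (x k) ▸ le_self_add).trans (ENNReal.le_add_tsum_of_le_add hH1 k)
  set δ := ((2 * ‖A‖ * √M.toReal + 1) / (lamlb * p)) ^ (p - 1)⁻¹
  have hsep : ∀ᶠ k in atTop, ∀ i, x (k + 1) i ≠ 0 → δ ≤ |x (k + 1) i| := by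
    have hw : Tendsto (fun k => β * ‖x (k + 1) - x k‖ + ε k) atTop (𝓝 0) := by
      simpa using (hstep.const_mul β).add (tendsto_zero_of_summable_sq hsum)
    filter_upwards [hw.eventually_lt_const one_pos] with k hk i hi
    obtain ⟨w, hwi, hwnorm⟩ := hH2 k
    have hwi1 : |w i| < 1 := (lp.abs_apply_le_norm w i).trans_lt (hwnorm.trans_lt hk)
    rw [hwi i hi] at hwi1
    refine (lt_abs_of_abs_add_mul_rpow_mul_sign_lt hp0 hp1 hlb (hlam i) ?_ hi hwi1).le
    rw [abs_mul, abs_two, mul_assoc]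
    gcongr
    exact (lp.abs_inner_apply_single_le A i _).trans (by gcongr; exact hres _)
  obtain ⟨N, J, hJ⟩ := lp.exists_support_eventually_eq (y := fun k => x (k + 1))
    (by positivity) hsep ((tendsto_add_atTop_nat 1).eventually (hstep.eventually_lt_const
      (by positivity)))
  refine ⟨N + 1, J, fun k hk => ?_⟩
  obtain ⟨k, rfl⟩ := Nat.exists_eq_add_of_le' (show 1 ≤ k by omega)
  exact hJ k (by omega)

/-- Proposition 6.1, consistency of supports in ℓ²: for the weighted
ℓ_p regularized objective `F x = ‖Ax - b‖² + ∑ᵢ λᵢ |xᵢ|^p` on ℓ² (values in `[0,∞]`), with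
weights `λᵢ ≥ λ̲ > 0`, `α, β > 0`, `∑ ε_k² < ∞`, `F(x⁰) < ∞`, if `{x^k}` satisfies the
inexact descent conditions (H1°) (stated additively in `[0,∞]`:
`F(x^{k+1}) + α‖x^{k+1}-x^k‖² ≤ F(x^k) + ε_k²`) and (H2°), then there exist `N` and a finite
index set `J` with `supp(x^k) = J` for all `k ≥ N`. -/
theorem stmt16 (H : Type*) [NormedAddCommGroup H] [InnerProductSpace ℝ H]
    (A : lp (fun _ : ℕ => ℝ) 2 →L[ℝ] H) (b : H)
    (p : ℝ) (hp0 : 0 < p) (hp1 : p < 1)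
    (lam : ℕ → ℝ) (lamlb : ℝ) (hlb : 0 < lamlb) (hlam : ∀ i, lamlb ≤ lam i)
    (F : lp (fun _ : ℕ => ℝ) 2 → ℝ≥0∞)
    (hF : ∀ x, F x = ENNReal.ofReal (‖A x - b‖ ^ 2) + ∑' i, ENNReal.ofReal (lam i * |x i| ^ p))
    (α β : ℝ) (hα : 0 < α) (hβ : 0 < β)
    (ε : ℕ → ℝ) (hε : ∀ k, 0 ≤ ε k) (hsum : Summable fun k => ε k ^ 2)
    (x : ℕ → lp (fun _ : ℕ => ℝ) 2) (hF0 : F (x 0) < ⊤)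
    (hH1 : ∀ k, F (x (k + 1)) + ENNReal.ofReal (α * ‖x (k + 1) - x k‖ ^ 2)
      ≤ F (x k) + ENNReal.ofReal (ε k ^ 2))
    (hH2 : ∀ k, ∃ w : lp (fun _ : ℕ => ℝ) 2,
      (∀ i, x (k + 1) i ≠ 0 →
        w i = 2 * ⟪A (lp.single 2 i (1 : ℝ)), A (x (k + 1)) - b⟫
          + lam i * p * |x (k + 1) i| ^ (p - 1) * Real.sign (x (k + 1) i)) ∧
      ‖w‖ ≤ β * ‖x (k + 1) - x k‖ + ε k) :
    ∃ N : ℕ, ∃ J : Finset ℕ, ∀ k ≥ N, {i : ℕ | x k i ≠ 0} = ↑J :=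
  stmt16_general H A b p hp0 hp1 lam lamlb hlb hlam F hF α β hα ε hsum x hF0 hH1 hH2
end
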